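/- (Input constraint LMI) Let E be symmetric positive definite, γ > 0, Y ∈ ℝ^{m×n}, c a 1×m row vector, and b > 0. If the block matrix [[b², cY], [Yᵀcᵀ, γE]] is positive semidefinite, then with K = γ⁻¹ Y E⁻¹, for every x with xᵀE⁻¹x ≤ γ it holds that c·(Kx) ≤ b. -/

import Mathlib

open Matrix

/-! Evaluate the block quadratic form at `z = (γ, -b E⁻¹x)`. With `d = cY E⁻¹x` and
`q = xᵀE⁻¹x ≤ γ` this gives `0 ≤ γ²b² - 2γb d + γb² q ≤ 2γ²b² - 2γb d`, so `d ≤ γb`,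
which is `cKx ≤ b` after dividing by `γ`. -/

theorem sumElim_dotProduct_fromBlocks_replicate_mulVec {R ι : Type*} [CommRing R] [Fintype ι]
    (a s : R) (v w : ι → R)
    (M : Matrix ι ι R) :
    Sum.elim (fun _ => s) w ⬝ᵥ
        fromBlocks (of fun _ _ => a) (replicateRow (Fin 1) v) (replicateCol (Fin 1) v) M *ᵥ
          Sum.elim (fun _ => s) w
      = a * s ^ 2 + 2 * s * (v ⬝ᵥ w) + w ⬝ᵥ M *ᵥ w := by
  have hrow : (fun _ => s) ⬝ᵥ replicateRow (Fin 1) v *ᵥ w = s * (v ⬝ᵥ w) := by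
    simp [dotProduct, mulVec]
  have hcol : w ⬝ᵥ replicateCol (Fin 1) v *ᵥ (fun _ => s) = s * (v ⬝ᵥ w) := by
    simp [dotProduct, mulVec, Finset.mul_sum, mul_comm, mul_left_comm]
  simp only [fromBlocks_mulVec, Sum.elim_comp_inl, Sum.elim_comp_inr, sumElim_dotProduct_sumElim,
    dotProduct_add, hrow, hcol]
  simp only [dotProduct, mulVec, Finset.univ_unique, Finset.sum_singleton, of_apply]
  ring

theorem dotProduct_le_of_fromBlocks_nonneg {R ι : Type*} [CommRing R] [LinearOrder R]
    [IsStrictOrderedRing R] [Fintype ι] {b r : R} (hb : 0 < b) (hr : 0 < r) {v : ι → R}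
    {M : Matrix ι ι R}
    (hM : ∀ z : Fin 1 ⊕ ι → R, 0 ≤ z ⬝ᵥ
      fromBlocks (of fun _ _ => b ^ 2) (replicateRow (Fin 1) v) (replicateCol (Fin 1) v) M *ᵥ z)
    {w : ι → R} (hw : w ⬝ᵥ M *ᵥ w ≤ r ^ 2) :
    v ⬝ᵥ w ≤ r * b := by
  have h := hM (Sum.elim (fun _ => r) (-b • w))
  rw [sumElim_dotProduct_fromBlocks_replicate_mulVec, dotProduct_smul,
    mulVec_smul, smul_dotProduct, dotProduct_smul] at h
  simp only [smul_eq_mul] at h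
  have hrb : 0 < r * b := mul_pos hr hb
  nlinarith [mul_le_mul_of_nonneg_left hw (sq_nonneg b)]

theorem stmt_5_general {n m : ℕ} (E : Matrix (Fin n) (Fin n) ℝ) (hE : E.PosDef)
    (γ : ℝ) (hγ : 0 < γ) (Y : Matrix (Fin m) (Fin n) ℝ) (c : Fin m → ℝ) (b : ℝ) (hb : 0 < b)
    (hPSD : ∀ z : Fin 1 ⊕ Fin n → ℝ,
      0 ≤ z ⬝ᵥ (Matrix.fromBlocks (Matrix.of fun _ _ => b ^ 2)
        (Matrix.replicateRow (Fin 1) (c ᵥ* Y)) (Matrix.replicateCol (Fin 1) ((c ᵥ* Y)))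
        (γ • E)).mulVec z)
    (K : Matrix (Fin m) (Fin n) ℝ) (hK : K = γ⁻¹ • (Y * E⁻¹)) :
    ∀ x : Fin n → ℝ, x ⬝ᵥ E⁻¹.mulVec x ≤ γ → c ⬝ᵥ K.mulVec x ≤ b := by
  intro x hx
  have hquad : (E⁻¹ *ᵥ x) ⬝ᵥ (γ • E) *ᵥ (E⁻¹ *ᵥ x) ≤ γ ^ 2 := by
    rw [smul_mulVec, mulVec_mulVec, mul_nonsing_inv E hE.det_pos.ne'.isUnit, one_mulVec,
      dotProduct_smul, dotProduct_comm, smul_eq_mul, sq]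
    exact mul_le_mul_of_nonneg_left hx hγ.le
  have hbound := dotProduct_le_of_fromBlocks_nonneg hb hγ hPSD hquad
  calc c ⬝ᵥ K *ᵥ x = γ⁻¹ * ((c ᵥ* Y) ⬝ᵥ E⁻¹ *ᵥ x) := by
        rw [hK, smul_mulVec, dotProduct_smul, ← mulVec_mulVec, dotProduct_mulVec, smul_eq_mul]
    _ ≤ γ⁻¹ * (γ * b) := by gcongr
    _ = b := inv_mul_cancel_left₀ hγ.ne' b

theorem stmt_5 {n m : ℕ} (E : Matrix (Fin n) (Fin n) ℝ) (hE : E.PosDef) (hEsymm : E.IsSymm)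
    (γ : ℝ) (hγ : 0 < γ) (Y : Matrix (Fin m) (Fin n) ℝ) (c : Fin m → ℝ) (b : ℝ) (hb : 0 < b)
    (hPSD : ∀ z : Fin 1 ⊕ Fin n → ℝ,
      0 ≤ z ⬝ᵥ (Matrix.fromBlocks (Matrix.of fun _ _ => b ^ 2)
        (Matrix.replicateRow (Fin 1) (c ᵥ* Y)) (Matrix.replicateCol (Fin 1) ((c ᵥ* Y)))
        (γ • E)).mulVec z)
    (K : Matrix (Fin m) (Fin n) ℝ) (hK : K = γ⁻¹ • (Y * E⁻¹)) :
    ∀ x : Fin n → ℝ, x ⬝ᵥ E⁻¹.mulVec x ≤ γ → c ⬝ᵥ K.mulVec x ≤ b :=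
  stmt_5_general E hE γ hγ Y c b hb hPSD K hK
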